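/- arXiv:2206.11108 — 4 statements merged into one kernel-verified Lean document; each statement's English description precedes it below -/
import Mathlib

section
/- Let 0 ≤ a < b, λ > 0, κ > 0, and let Φ : ℝ → ℝ be defined by Φ(y) = 0 for y ≤ a, Φ(y) = (y−a)/(b−a) for a ≤ y ≤ b, and Φ(y) = 1 for y ≥ b. Suppose f : [0,∞) → ℝ is continuous and satisfies f(x) = κ + λ·∫₀ˣ f(t)·(1 − Φ(x−t)) dt for all x ≥ 0. Then f is differentiable on (0,∞) and f′(x) = λ·f(x) − (λ/(b−a))·∫_{max{x−b,0}}^{max{x−a,0}} f(t) dt for every x > 0. -/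
open MeasureTheory intervalIntegral

/-! Extend `f` continuously by `g t = f (max t 0)` and let `G` be the primitive of `g` from `0`.
Since `Φ y = ((y - a)⁺ - (y - b)⁺) / (b - a)`, the equation becomes
`f = κ + λ (G - (K_a - K_b) / (b - a))` on `[0, ∞)` with `K_c x = ∫₀ˣ g t (x - t - c)⁺ dt`.
Cutting off the part of `[0, x]` where the ramp vanishes and integrating by parts (Cauchy's formula
for repeated integration) turns `K_c x` into `∫₀ˣ G ((s - c)⁺) ds`, an integral of a continuous
function, so the fundamental theorem of calculus differentiates every term; the difference
`G ((x - a)⁺) - G ((x - b)⁺)` is the integral of `f` in the claim. -/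

theorem uniformCDF_eq_ramp_sub_ramp {a b : ℝ} {Φ : ℝ → ℝ} (hab : a < b)
    (hΦ1 : ∀ y : ℝ, y ≤ a → Φ y = 0)
    (hΦ2 : ∀ y : ℝ, a ≤ y → y ≤ b → Φ y = (y - a) / (b - a))
    (hΦ3 : ∀ y : ℝ, b ≤ y → Φ y = 1) (y : ℝ) :
    Φ y = (max (y - a) 0 - max (y - b) 0) / (b - a) := by
  rcases le_total y a with hya | hay
  · rw [hΦ1 y hya, max_eq_right (by linarith), max_eq_right (by linarith), sub_zero, zero_div]
  rcases le_total y b with hyb | hby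
  · rw [hΦ2 y hay hyb, max_eq_left (by linarith), max_eq_right (by linarith), sub_zero]
  · rw [hΦ3 y hby, max_eq_left (by linarith), max_eq_left (by linarith), eq_div_iff (by linarith)]
    ring

section IntervalIntegral

variable {f : ℝ → ℝ} {a b c : ℝ}

theorem integral_eq_integral_of_eqOn_zero_right (hf : Continuous f)
    (h : Set.EqOn f 0 (Set.uIcc b c)) :
    ∫ x in a..c, f x = ∫ x in a..b, f x := by
  rw [← integral_add_adjacent_intervals (hf.intervalIntegrable a b) (hf.intervalIntegrable b c),
    integral_congr h]
  simp

theorem integral_eq_integral_of_eqOn_zero_left (hf : Continuous f)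
    (h : Set.EqOn f 0 (Set.uIcc a b)) :
    ∫ x in a..c, f x = ∫ x in b..c, f x := by
  rw [← integral_add_adjacent_intervals (hf.intervalIntegrable a b) (hf.intervalIntegrable b c),
    integral_congr h]
  simp

end IntervalIntegral

section Primitive

variable {g : ℝ → ℝ}

theorem integral_mul_sub_eq_integral_primitive (hg : Continuous g) (a y : ℝ) :
    ∫ t in a..y, g t * (y - t) = ∫ u in a..y, ∫ s in a..u, g s := by
  have hG : ∀ t ∈ Set.uIcc a y, HasDerivAt (fun u => ∫ s in a..u, g s) (g t) t :=
    fun t _ => (hg.integral_hasStrictDerivAt a t).hasDerivAt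
  have hv : ∀ t ∈ Set.uIcc a y, HasDerivAt (fun s : ℝ => s - y) 1 t :=
    fun t _ => (hasDerivAt_id t).sub_const y
  have hparts := integral_mul_deriv_eq_deriv_mul hG hv (hg.intervalIntegrable a y)
    intervalIntegrable_const
  simp only [mul_one, sub_self, mul_zero, integral_same, zero_mul, zero_sub] at hparts
  rw [hparts, ← intervalIntegral.integral_neg]
  exact integral_congr fun t _ => by ring

theorem integral_mul_ramp_eq_integral_primitive_comp_ramp (hg : Continuous g) {c x : ℝ}
    (hc : 0 ≤ c) (hx : 0 ≤ x) :
    ∫ t in (0 : ℝ)..x, g t * max (x - t - c) 0 =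
      ∫ s in (0 : ℝ)..x, ∫ r in (0 : ℝ)..max (s - c) 0, g r := by
  rcases le_total x c with hxc | hcx
  · have hL : Set.EqOn (fun t => g t * max (x - t - c) 0) 0 (Set.uIcc 0 x) := fun t ht => by
      rw [Set.uIcc_of_le hx] at ht
      simp only [Pi.zero_apply, max_eq_right (by linarith [ht.1] : x - t - c ≤ 0), mul_zero]
    have hR : Set.EqOn (fun s => ∫ r in (0 : ℝ)..max (s - c) 0, g r) 0 (Set.uIcc 0 x) :=
      fun s hs => by
        rw [Set.uIcc_of_le hx] at hs
        simp only [Pi.zero_apply, max_eq_right (by linarith [hs.2] : s - c ≤ 0), integral_same]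
    rw [integral_congr hL, integral_congr hR]
  calc ∫ t in (0 : ℝ)..x, g t * max (x - t - c) 0
      = ∫ t in (0 : ℝ)..x - c, g t * max (x - t - c) 0 := by
        refine integral_eq_integral_of_eqOn_zero_right (by fun_prop) fun t ht => ?_
        rw [Set.uIcc_of_le (by linarith)] at ht
        simp only [Pi.zero_apply, max_eq_right (by linarith [ht.1] : x - t - c ≤ 0), mul_zero]
    _ = ∫ t in (0 : ℝ)..x - c, g t * (x - c - t) :=
        integral_congr fun t ht => by
          rw [Set.uIcc_of_le (by linarith)] at ht
          rw [max_eq_left (by linarith [ht.2]), sub_right_comm]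
    _ = ∫ u in (0 : ℝ)..x - c, ∫ r in (0 : ℝ)..u, g r :=
        integral_mul_sub_eq_integral_primitive hg 0 (x - c)
    _ = ∫ s in c..x, ∫ r in (0 : ℝ)..s - c, g r := by
        rw [integral_comp_sub_right (fun u => ∫ r in (0 : ℝ)..u, g r), sub_self]
    _ = ∫ s in c..x, ∫ r in (0 : ℝ)..max (s - c) 0, g r := by
        refine integral_congr fun s hs => ?_
        rw [Set.uIcc_of_le hcx] at hs
        simp only [max_eq_left (by linarith [hs.1] : 0 ≤ s - c)]
    _ = ∫ s in (0 : ℝ)..x, ∫ r in (0 : ℝ)..max (s - c) 0, g r := by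
        refine (integral_eq_integral_of_eqOn_zero_left (by fun_prop) fun s hs => ?_).symm
        rw [Set.uIcc_of_le hc] at hs
        simp only [Pi.zero_apply, max_eq_right (by linarith [hs.2] : s - c ≤ 0), integral_same]

theorem hasDerivAt_integral_primitive_comp_ramp (hg : Continuous g) (c x : ℝ) :
    HasDerivAt (fun z => ∫ s in (0 : ℝ)..z, ∫ r in (0 : ℝ)..max (s - c) 0, g r)
      (∫ r in (0 : ℝ)..max (x - c) 0, g r) x := by
  have hcont : Continuous fun s => ∫ r in (0 : ℝ)..max (s - c) 0, g r := by fun_prop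
  exact (hcont.integral_hasStrictDerivAt 0 x).hasDerivAt

end Primitive

theorem eq_primitive_sub_integral_primitive_comp_ramp {a b lam κ : ℝ} {Φ f g : ℝ → ℝ}
    (ha : 0 ≤ a) (hab : a < b)
    (hΦ1 : ∀ y : ℝ, y ≤ a → Φ y = 0)
    (hΦ2 : ∀ y : ℝ, a ≤ y → y ≤ b → Φ y = (y - a) / (b - a))
    (hΦ3 : ∀ y : ℝ, b ≤ y → Φ y = 1)
    (hf : ∀ x : ℝ, 0 ≤ x → f x = κ + lam * ∫ t in (0 : ℝ)..x, f t * (1 - Φ (x - t)))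
    (hg : Continuous g) (hgf : ∀ t, 0 ≤ t → g t = f t) {z : ℝ} (hz : 0 ≤ z) :
    f z = κ + lam * ((∫ r in (0 : ℝ)..z, g r) -
      ((∫ s in (0 : ℝ)..z, ∫ r in (0 : ℝ)..max (s - a) 0, g r) -
        ∫ s in (0 : ℝ)..z, ∫ r in (0 : ℝ)..max (s - b) 0, g r) / (b - a)) := by
  have hba : b - a ≠ 0 := by linarith
  have hramp : ∀ c, IntervalIntegrable (fun t => g t * max (z - t - c) 0) volume 0 z :=
    fun c => (by fun_prop : Continuous fun t => g t * max (z - t - c) 0).intervalIntegrable _ _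
  rw [hf z hz]
  congr 2
  calc ∫ t in (0 : ℝ)..z, f t * (1 - Φ (z - t))
      = ∫ t in (0 : ℝ)..z,
          (g t - (g t * max (z - t - a) 0 - g t * max (z - t - b) 0) / (b - a)) :=
        integral_congr fun t ht => by
          rw [Set.uIcc_of_le hz] at ht
          rw [← hgf t ht.1, uniformCDF_eq_ramp_sub_ramp hab hΦ1 hΦ2 hΦ3]
          field_simp
    _ = _ := by
      rw [integral_sub (hg.intervalIntegrable 0 z) (((hramp a).sub (hramp b)).div_const _),
        intervalIntegral.integral_div, integral_sub (hramp a) (hramp b),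
        integral_mul_ramp_eq_integral_primitive_comp_ramp hg ha hz,
        integral_mul_ramp_eq_integral_primitive_comp_ramp hg (ha.trans hab.le) hz]

theorem stmt_1_general (a b lam κ : ℝ) (Φ f : ℝ → ℝ)
    (ha : 0 ≤ a) (hab : a < b)
    (hΦ1 : ∀ y : ℝ, y ≤ a → Φ y = 0)
    (hΦ2 : ∀ y : ℝ, a ≤ y → y ≤ b → Φ y = (y - a) / (b - a))
    (hΦ3 : ∀ y : ℝ, b ≤ y → Φ y = 1)
    (hf_cont : ContinuousOn f (Set.Ici 0))
    (hf : ∀ x : ℝ, 0 ≤ x →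
      f x = κ + lam * ∫ t in (0:ℝ)..x, f t * (1 - Φ (x - t))) :
    ∀ x : ℝ, 0 < x →
      HasDerivAt f
        (lam * f x - (lam / (b - a)) * ∫ t in (max (x - b) 0)..(max (x - a) 0), f t) x := by
  intro x hx
  set g : ℝ → ℝ := fun t => f (max t 0)
  have hg : Continuous g :=
    hf_cont.comp_continuous (by fun_prop) fun t => le_max_right t 0
  have hgf : ∀ t, 0 ≤ t → g t = f t := fun t ht => by simp only [g, max_eq_left ht]
  have hrep : f =ᶠ[nhds x] fun z => κ + lam * ((∫ r in (0 : ℝ)..z, g r) -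
      ((∫ s in (0 : ℝ)..z, ∫ r in (0 : ℝ)..max (s - a) 0, g r) -
        ∫ s in (0 : ℝ)..z, ∫ r in (0 : ℝ)..max (s - b) 0, g r) / (b - a)) := by
    filter_upwards [eventually_gt_nhds hx] with z hz
    exact eq_primitive_sub_integral_primitive_comp_ramp ha hab hΦ1 hΦ2 hΦ3 hf hg hgf hz.le
  have hderiv := ((((hg.integral_hasStrictDerivAt 0 x).hasDerivAt).sub
    (((hasDerivAt_integral_primitive_comp_ramp hg a x).sub
      (hasDerivAt_integral_primitive_comp_ramp hg b x)).div_const (b - a))).const_mul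
        lam).const_add κ
  have hwindow : ∫ t in (max (x - b) 0)..(max (x - a) 0), f t
      = (∫ r in (0 : ℝ)..max (x - a) 0, g r) - ∫ r in (0 : ℝ)..max (x - b) 0, g r := by
    rw [integral_interval_sub_left (hg.intervalIntegrable _ _) (hg.intervalIntegrable _ _)]
    exact integral_congr fun t ht => (hgf t (le_trans (le_min (le_max_right _ _)
      (le_max_right _ _)) ht.1)).symm
  rw [hwindow, ← hgf x hx.le]
  exact (hderiv.congr_of_eventuallyEq hrep).congr_deriv (by ring)

/-- If `f` is continuous on `[0,∞)` and satisfies the integral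
equation `f(x) = κ + λ·∫₀ˣ f(t)·(1 − Φ(x−t)) dt` for all `x ≥ 0`, where `Φ` is
the Uniform[a,b] cumulative distribution function, then `f` is differentiable
on `(0,∞)` with `f′(x) = λ·f(x) − (λ/(b−a))·∫_{max(x−b,0)}^{max(x−a,0)} f(t) dt`. -/
theorem stmt_1 (a b lam κ : ℝ) (Φ f : ℝ → ℝ)
    (ha : 0 ≤ a) (hab : a < b) (hlam : 0 < lam) (hκ : 0 < κ)
    (hΦ1 : ∀ y : ℝ, y ≤ a → Φ y = 0)
    (hΦ2 : ∀ y : ℝ, a ≤ y → y ≤ b → Φ y = (y - a) / (b - a))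
    (hΦ3 : ∀ y : ℝ, b ≤ y → Φ y = 1)
    (hf_cont : ContinuousOn f (Set.Ici 0))
    (hf : ∀ x : ℝ, 0 ≤ x →
      f x = κ + lam * ∫ t in (0:ℝ)..x, f t * (1 - Φ (x - t))) :
    ∀ x : ℝ, 0 < x →
      HasDerivAt f
        (lam * f x - (lam / (b - a)) * ∫ t in (max (x - b) 0)..(max (x - a) 0), f t) x :=
  stmt_1_general a b lam κ Φ f ha hab hΦ1 hΦ2 hΦ3 hf_cont hf
end

section
/- Let 0 ≤ a < b, λ > 0, and ρ = λ·(a+b)/2 with ρ < 1. Define Θ(s) = (exp(−a·s) − exp(−b·s))/((b−a)·s) and F(s) = (1−ρ)·s/(s − λ + λ·Θ(s)) for s > 0. Then lim_{s→∞} s·(F(s) − (1−ρ)) = λ·(1−ρ). -/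
open Filter Topology

/-! Since `0 ≤ Θ(s) ≤ 1/((b-a)s)`, `Θ` vanishes at infinity. Writing the denominator of `F` as
`s·d(s)` with `d(s) = 1 + λ(Θ(s) - 1)/s → 1`, one gets `s·(F(s) - c) = λc(1 - Θ(s))/d(s)` with
`c = 1 - ρ`, which tends to `λc`. -/

lemma tendsto_uniformLaplace_atTop_zero {a b : ℝ} (ha : 0 ≤ a) (hab : a < b) :
    Tendsto (fun s : ℝ => (Real.exp (-a * s) - Real.exp (-b * s)) / ((b - a) * s)) atTop
      (𝓝 0) := by
  have hba : 0 < b - a := sub_pos.2 hab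
  have hbound : Tendsto (fun s : ℝ => ((b - a) * s)⁻¹) atTop (𝓝 0) :=
    tendsto_inv_atTop_zero.comp (tendsto_id.const_mul_atTop hba)
  refine squeeze_zero' ?_ ?_ hbound
  · filter_upwards [eventually_gt_atTop 0] with s hs
    have : Real.exp (-b * s) ≤ Real.exp (-a * s) := Real.exp_le_exp.2 (by nlinarith)
    exact div_nonneg (sub_nonneg.2 this) (by positivity)
  · filter_upwards [eventually_gt_atTop 0] with s hs
    have : Real.exp (-a * s) ≤ 1 := Real.exp_le_one_iff.2 (by nlinarith)
    rw [← one_div]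
    gcongr
    linarith [Real.exp_pos (-b * s)]

lemma tendsto_mul_div_sub_of_tendsto_zero {θ : ℝ → ℝ} (hθ : Tendsto θ atTop (𝓝 0))
    (lam c : ℝ) :
    Tendsto (fun s : ℝ => s * (c * s / (s - lam + lam * θ s) - c)) atTop (𝓝 (lam * c)) := by
  set d : ℝ → ℝ := fun s => 1 + lam * (θ s - 1) * s⁻¹
  have hd : Tendsto d atTop (𝓝 1) := by
    simpa using tendsto_const_nhds.add
      (((hθ.sub_const 1).const_mul lam).mul tendsto_inv_atTop_zero)
  have hlim : Tendsto (fun s => lam * c * (1 - θ s) / d s) atTop (𝓝 (lam * c * (1 - 0) / 1)) :=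
    ((hθ.const_sub 1).const_mul (lam * c)).div hd one_ne_zero
  rw [sub_zero, mul_one, div_one] at hlim
  refine hlim.congr' ?_
  filter_upwards [eventually_gt_atTop 0, hd.eventually_ne one_ne_zero] with s hs hds
  have hden : s - lam + lam * θ s = s * d s := by
    simp only [d]
    field_simp
    ring
  rw [hden]
  field_simp
  simp only [d]
  field_simp
  ring

theorem stmt_4_general (a b lam ρ : ℝ) (Θ F : ℝ → ℝ)
    (ha : 0 ≤ a) (hab : a < b)
    (hΘ : ∀ s : ℝ, 0 < s →
      Θ s = (Real.exp (-a * s) - Real.exp (-b * s)) / ((b - a) * s))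
    (hF : ∀ s : ℝ, 0 < s → F s = (1 - ρ) * s / (s - lam + lam * Θ s)) :
    Tendsto (fun s : ℝ => s * (F s - (1 - ρ))) atTop (𝓝 (lam * (1 - ρ))) := by
  have hΘ0 : Tendsto Θ atTop (𝓝 0) :=
    (tendsto_uniformLaplace_atTop_zero ha hab).congr'
      (by filter_upwards [eventually_gt_atTop 0] with s hs using (hΘ s hs).symm)
  refine (tendsto_mul_div_sub_of_tendsto_zero hΘ0 lam (1 - ρ)).congr' ?_
  filter_upwards [eventually_gt_atTop 0] with s hs
  rw [hF s hs]

/-- initial value theorem: with `Θ` the Laplace transform of the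
Uniform[a,b] density and `F` the Pollaczek–Khinchine transform, one has
`lim_{s→∞} s·(F(s) − (1−ρ)) = λ·(1−ρ)`. -/
theorem stmt_4 (a b lam ρ : ℝ) (Θ F : ℝ → ℝ)
    (ha : 0 ≤ a) (hab : a < b) (hlam : 0 < lam)
    (hρ : ρ = lam * (a + b) / 2) (hρ1 : ρ < 1)
    (hΘ : ∀ s : ℝ, 0 < s →
      Θ s = (Real.exp (-a * s) - Real.exp (-b * s)) / ((b - a) * s))
    (hF : ∀ s : ℝ, 0 < s → F s = (1 - ρ) * s / (s - lam + lam * Θ s)) :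
    Tendsto (fun s : ℝ => s * (F s - (1 - ρ))) atTop (𝓝 (lam * (1 - ρ))) :=
  stmt_4_general a b lam ρ Θ F ha hab hΘ hF
end

section
/- Let g₀(x) = (1/6)·exp(x)·(4·cos(√2·x) − √2·sin(√2·x)). Then the function g₁(x) = (1/6)·exp(x)·(4·cos(√2·x) − √2·sin(√2·x)) − (1/24)·exp(−2/3 + x)·(4·cos(√2·(x−2/3)) − √2·sin(√2·(x−2/3))) + (1/4)·x·exp(−2/3 + x)·(cos(√2·(x−2/3)) + 2√2·sin(√2·(x−2/3))) satisfies the delay differential equation g₁″(x) = 2·g₁′(x) − 3·g₁(x) + 3·g₀(x − 2/3) for all x, together with the matching conditions g₁(2/3) = g₀(2/3) and g₁′(2/3) = 1 + g₀′(2/3). -/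
/-!
The functions `eˣ (a cos √2x + b sin √2x)` solve the homogeneous equation `y'' = 2y' - 3y`
(characteristic roots `1 ± i√2`), and so do their translates. Hence
`g₁ x = g₀ x + v (x - 2/3) + x * w (x - 2/3)` with `v`, `w` of this form satisfies the equation
with forcing `2 (w' - w) (x - 2/3)`, coming from the product rule on the factor `x`; for the
`w` at hand, `2 (w' - w) = 3 g₀`. At `x = 2/3` the translates are evaluated at `0`, which gives
the matching conditions.
-/

open Real

noncomputable def expCosSin (ω a b x : ℝ) : ℝ := exp x * (a * cos (ω * x) + b * sin (ω * x))

def shiftComb (c : ℝ) (u v w : ℝ → ℝ) (x : ℝ) : ℝ := u x + v (x - c) + x * w (x - c)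

def SolvesHomogeneous (k : ℝ) (f : ℝ → ℝ) : Prop :=
  Differentiable ℝ f ∧ Differentiable ℝ (deriv f) ∧
    ∀ x, deriv (deriv f) x = 2 * deriv f x - k * f x

section ExpCosSin

variable (ω a b : ℝ)

@[simp]
theorem expCosSin_zero : expCosSin ω a b 0 = a := by
  simp [expCosSin]

theorem hasDerivAt_expCosSin (x : ℝ) :
    HasDerivAt (expCosSin ω a b) (expCosSin ω (a + ω * b) (b - ω * a) x) x := by
  have hωx : HasDerivAt (ω * ·) ω x := by simpa using (hasDerivAt_id x).const_mul ω
  have := (hasDerivAt_exp x).mul ((hωx.cos.const_mul a).add (hωx.sin.const_mul b))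
  refine this.congr_deriv ?_
  simp only [expCosSin, Pi.add_apply]
  ring

theorem differentiable_expCosSin : Differentiable ℝ (expCosSin ω a b) :=
  fun x => (hasDerivAt_expCosSin ω a b x).differentiableAt

theorem deriv_expCosSin : deriv (expCosSin ω a b) = expCosSin ω (a + ω * b) (b - ω * a) :=
  funext fun x => (hasDerivAt_expCosSin ω a b x).deriv

theorem solvesHomogeneous_expCosSin : SolvesHomogeneous (1 + ω ^ 2) (expCosSin ω a b) := by
  refine ⟨differentiable_expCosSin ω a b, ?_, fun x => ?_⟩
  · rw [deriv_expCosSin]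
    exact differentiable_expCosSin _ _ _
  · simp only [deriv_expCosSin, expCosSin]
    ring

end ExpCosSin

section ShiftComb

variable {c : ℝ} {u v w : ℝ → ℝ}

theorem deriv_shiftComb (hu : Differentiable ℝ u) (hv : Differentiable ℝ v)
    (hw : Differentiable ℝ w) :
    deriv (shiftComb c u v w) = shiftComb c (deriv u) (deriv v + w) (deriv w) := by
  funext x
  have hshift : ∀ f : ℝ → ℝ, Differentiable ℝ f →
      HasDerivAt (fun y => f (y - c)) (deriv f (x - c)) x :=
    fun f hf => (hf (x - c)).hasDerivAt.comp_sub_const x c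
  have := ((hu x).hasDerivAt.add (hshift v hv)).add ((hasDerivAt_id x).mul (hshift w hw))
  refine (this.congr_deriv ?_).deriv
  simp only [shiftComb, Pi.add_apply, id]
  ring

theorem deriv_deriv_shiftComb {k : ℝ} (hu : SolvesHomogeneous k u) (hv : SolvesHomogeneous k v)
    (hw : SolvesHomogeneous k w) (x : ℝ) :
    deriv (deriv (shiftComb c u v w)) x = 2 * deriv (shiftComb c u v w) x
      - k * shiftComb c u v w x + 2 * (deriv w (x - c) - w (x - c)) := by
  obtain ⟨hu₁, hu₂, hu⟩ := hu
  obtain ⟨hv₁, hv₂, hv⟩ := hv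
  obtain ⟨hw₁, hw₂, hw⟩ := hw
  rw [deriv_shiftComb hu₁ hv₁ hw₁, deriv_shiftComb hu₂ (hv₂.add hw₁) hw₂]
  have hvw : deriv (deriv v + w) = deriv (deriv v) + deriv w :=
    funext fun y => deriv_add (hv₂ y) (hw₁ y)
  simp only [shiftComb, hvw, Pi.add_apply, hu, hv, hw]
  ring

end ShiftComb

/-- With `g₀(x) = (1/6)eˣ(4cos(√2 x) − √2 sin(√2 x))`, the stated
function `g₁` satisfies the delay differential equation
`g₁″(x) = 2g₁′(x) − 3g₁(x) + 3g₀(x − 2/3)` for all `x`, with matching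
conditions `g₁(2/3) = g₀(2/3)` and `g₁′(2/3) = 1 + g₀′(2/3)`. -/
theorem stmt_7 (g₀ g₁ : ℝ → ℝ)
    (hg₀ : ∀ x : ℝ, g₀ x = (1 / 6) * Real.exp x *
      (4 * Real.cos (Real.sqrt 2 * x) - Real.sqrt 2 * Real.sin (Real.sqrt 2 * x)))
    (hg₁ : ∀ x : ℝ, g₁ x = (1 / 6) * Real.exp x *
        (4 * Real.cos (Real.sqrt 2 * x) - Real.sqrt 2 * Real.sin (Real.sqrt 2 * x))
      - (1 / 24) * Real.exp (-2 / 3 + x) *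
        (4 * Real.cos (Real.sqrt 2 * (x - 2 / 3))
          - Real.sqrt 2 * Real.sin (Real.sqrt 2 * (x - 2 / 3)))
      + (1 / 4) * x * Real.exp (-2 / 3 + x) *
        (Real.cos (Real.sqrt 2 * (x - 2 / 3))
          + 2 * Real.sqrt 2 * Real.sin (Real.sqrt 2 * (x - 2 / 3)))) :
    (∀ x : ℝ, deriv (deriv g₁) x = 2 * deriv g₁ x - 3 * g₁ x + 3 * g₀ (x - 2 / 3))
      ∧ g₁ (2 / 3) = g₀ (2 / 3)
      ∧ deriv g₁ (2 / 3) = 1 + deriv g₀ (2 / 3) := by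
  have hsq : √2 * √2 = 2 := mul_self_sqrt zero_le_two
  have hsol : ∀ a b, SolvesHomogeneous 3 (expCosSin √2 a b) := fun a b => by
    simpa only [sq, hsq, show (1 : ℝ) + 2 = 3 by norm_num] using solvesHomogeneous_expCosSin √2 a b
  obtain rfl : g₀ = expCosSin √2 (2 / 3) (-√2 / 6) := funext fun x => by
    rw [hg₀, expCosSin]
    ring
  obtain rfl : g₁ = shiftComb (2 / 3) (expCosSin √2 (2 / 3) (-√2 / 6))
      (expCosSin √2 (-1 / 6) (√2 / 24)) (expCosSin √2 (1 / 4) (√2 / 2)) := funext fun x => by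
    rw [hg₁]
    simp only [shiftComb, expCosSin]
    ring_nf
  refine ⟨fun x => ?_, ?_, ?_⟩
  · rw [deriv_deriv_shiftComb (hsol _ _) (hsol _ _) (hsol _ _), deriv_expCosSin]
    simp only [expCosSin]
    linear_combination exp (x - 2 / 3) * cos (√2 * (x - 2 / 3)) * hsq
  · norm_num [shiftComb]
  · rw [deriv_shiftComb (differentiable_expCosSin _ _ _) (differentiable_expCosSin _ _ _)
      (differentiable_expCosSin _ _ _), shiftComb]
    simp only [deriv_expCosSin, Pi.add_apply, sub_self, expCosSin_zero]
    linear_combination (1 / 24 + 1 / 3) * hsq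
end

section
/- Let λ > 0, a > 0, and 0 < ρ < 1. For each natural number n define the Erlang function hₙ(x) = (1−ρ) · (d/dx) Σ_{m=0}^{n} (−1)^m · λ^m · (x − a·m)^m / m! · exp(λ·(x − a·m)). Then for every n ≥ 1 and every real x, hₙ′(x) = λ·hₙ(x) − λ·h_{n−1}(x − a). -/
/-! Each summand `cₘ(y) = (-λ)^m (y - am)^m / m! · e^{λ(y - am)}` satisfies the delay equation
`cₘ' = λ cₘ - λ cₘ₋₁(· - a)` (and `c₀' = λ c₀`), so the partial sums `Gₙ = ∑_{m ≤ n} cₘ` satisfy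
`Gₙ' = λ Gₙ - λ Gₙ₋₁(· - a)`. Differentiating this linear equation once more shows that `Gₙ'`,
hence `hₙ = (1 - ρ) Gₙ'`, satisfies it too. -/

open Finset

section DelayEquation

variable {𝕜 F : Type*} [NontriviallyNormedField 𝕜] [NormedAddCommGroup F] [NormedSpace 𝕜 F]

theorem hasDerivAt_deriv_of_deriv_eq_delay {f g : 𝕜 → F} {c a : 𝕜}
    (hf : Differentiable 𝕜 f) (hg : Differentiable 𝕜 g)
    (hfg : ∀ x, deriv f x = c • f x - c • g (x - a)) (x : 𝕜) :
    HasDerivAt (deriv f) (c • deriv f x - c • deriv g (x - a)) x := by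
  convert ((hf x).hasDerivAt.const_smul c).sub
    (((hg (x - a)).hasDerivAt.comp_sub_const x a).const_smul c) using 1
  exact funext hfg

end DelayEquation

noncomputable def erlangTerm (lam a : ℝ) (m : ℕ) (y : ℝ) : ℝ :=
  (-1 : ℝ) ^ m * lam ^ m * (y - a * (m : ℝ)) ^ m / (Nat.factorial m : ℝ)
    * Real.exp (lam * (y - a * (m : ℝ)))

noncomputable def erlangSum (lam a : ℝ) (n : ℕ) (y : ℝ) : ℝ :=
  ∑ m ∈ range (n + 1), erlangTerm lam a m y

section Erlang

variable (lam a : ℝ)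

theorem hasDerivAt_erlangTerm_zero (y : ℝ) :
    HasDerivAt (erlangTerm lam a 0) (lam * erlangTerm lam a 0 y) y := by
  have hterm : erlangTerm lam a 0 = fun y => Real.exp (lam * y) := by
    funext y; simp [erlangTerm]
  rw [hterm]
  exact ((hasDerivAt_id' y).const_mul lam).exp.congr_deriv (by ring)

theorem hasDerivAt_erlangTerm_succ (m : ℕ) (y : ℝ) :
    HasDerivAt (erlangTerm lam a (m + 1))
      (lam * erlangTerm lam a (m + 1) y - lam * erlangTerm lam a m (y - a)) y := by
  have hpow : HasDerivAt (fun y => (y - a * (m + 1 : ℕ)) ^ (m + 1))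
      ((m + 1 : ℕ) * (y - a * (m + 1 : ℕ)) ^ m) y := by
    simpa using ((hasDerivAt_id y).sub_const (a * (m + 1 : ℕ))).fun_pow (m + 1)
  have hexp : HasDerivAt (fun y => Real.exp (lam * (y - a * (m + 1 : ℕ))))
      (Real.exp (lam * (y - a * (m + 1 : ℕ))) * lam) y :=
    (((hasDerivAt_id' y).sub_const _).const_mul lam).exp.congr_deriv (by ring)
  refine (((hpow.const_mul ((-1 : ℝ) ^ (m + 1) * lam ^ (m + 1))).div_const
    ((m + 1).factorial : ℝ)).mul hexp).congr_deriv ?_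
  have hshift : y - a - a * (m : ℝ) = y - a * ((m + 1 : ℕ) : ℝ) := by push_cast; ring
  simp only [erlangTerm, hshift, Nat.factorial_succ]
  push_cast
  field_simp
  ring

theorem erlangSum_zero : erlangSum lam a 0 = erlangTerm lam a 0 := by
  funext y; simp [erlangSum]

theorem erlangSum_succ (n : ℕ) :
    erlangSum lam a (n + 1) = erlangSum lam a n + erlangTerm lam a (n + 1) := by
  funext y; exact sum_range_succ _ _

theorem hasDerivAt_erlangSum_zero (y : ℝ) :
    HasDerivAt (erlangSum lam a 0) (lam * erlangSum lam a 0 y) y := by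
  rw [erlangSum_zero]
  exact hasDerivAt_erlangTerm_zero lam a y

theorem hasDerivAt_erlangSum_succ (n : ℕ) (y : ℝ) :
    HasDerivAt (erlangSum lam a (n + 1))
      (lam * erlangSum lam a (n + 1) y - lam * erlangSum lam a n (y - a)) y := by
  induction n generalizing y with
  | zero =>
    rw [erlangSum_succ]
    refine ((hasDerivAt_erlangSum_zero lam a y).add
      (hasDerivAt_erlangTerm_succ lam a 0 y)).congr_deriv ?_
    rw [erlangSum_zero, Pi.add_apply]
    ring
  | succ n ih =>
    rw [erlangSum_succ]
    refine ((ih y).add (hasDerivAt_erlangTerm_succ lam a (n + 1) y)).congr_deriv ?_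
    simp only [erlangSum_succ, Pi.add_apply]
    ring

theorem differentiable_erlangSum : ∀ n, Differentiable ℝ (erlangSum lam a n)
  | 0 => fun y => (hasDerivAt_erlangSum_zero lam a y).differentiableAt
  | n + 1 => fun y => (hasDerivAt_erlangSum_succ lam a n y).differentiableAt

end Erlang

theorem stmt_9_general (lam a ρ : ℝ) (h : ℕ → ℝ → ℝ)
    (hh : ∀ (n : ℕ) (x : ℝ), h n x = (1 - ρ) *
      deriv (fun y : ℝ => ∑ m ∈ Finset.range (n + 1),
        (-1 : ℝ) ^ m * lam ^ m * (y - a * (m : ℝ)) ^ m / (Nat.factorial m : ℝ)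
          * Real.exp (lam * (y - a * (m : ℝ)))) x) :
    ∀ n : ℕ, 1 ≤ n → ∀ x : ℝ,
      deriv (h n) x = lam * h n x - lam * h (n - 1) (x - a) := by
  intro n hn x
  obtain ⟨k, rfl⟩ := Nat.exists_eq_add_of_le' hn
  have hG : ∀ k, h k = fun x => (1 - ρ) * deriv (erlangSum lam a k) x := fun k => funext (hh k)
  have hsecond := hasDerivAt_deriv_of_deriv_eq_delay
    (differentiable_erlangSum lam a (k + 1)) (differentiable_erlangSum lam a k)
    (fun y => (hasDerivAt_erlangSum_succ lam a k y).deriv) x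
  simp only [smul_eq_mul] at hsecond
  simp only [hG, Nat.add_sub_cancel]
  rw [(hsecond.const_mul (1 - ρ)).deriv]
  ring

/-- With `hₙ` the Erlang pieces of the equilibrium M/D/1
waiting-time density, for every `n ≥ 1` and every real `x`,
`hₙ′(x) = λ·hₙ(x) − λ·h_{n−1}(x − a)`. -/
theorem stmt_9 (lam a ρ : ℝ) (h : ℕ → ℝ → ℝ)
    (hlam : 0 < lam) (ha : 0 < a) (hρ0 : 0 < ρ) (hρ1 : ρ < 1)
    (hh : ∀ (n : ℕ) (x : ℝ), h n x = (1 - ρ) *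
      deriv (fun y : ℝ => ∑ m ∈ Finset.range (n + 1),
        (-1 : ℝ) ^ m * lam ^ m * (y - a * (m : ℝ)) ^ m / (Nat.factorial m : ℝ)
          * Real.exp (lam * (y - a * (m : ℝ)))) x) :
    ∀ n : ℕ, 1 ≤ n → ∀ x : ℝ,
      deriv (h n) x = lam * h n x - lam * h (n - 1) (x - a) :=
  stmt_9_general lam a ρ h hh
end
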